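/- arXiv:1803.02980 — 3 statements merged into one kernel-verified Lean document; each statement's English description precedes it below -/
import Mathlib

section
/- Let f : ℝⁿ → ℝ be a C² function that is bounded together with all its second derivatives. Then ‖∂f‖_{L^∞} ≤ C ‖f‖_{L^∞}^{1/2} ‖∂²f‖_{L^∞}^{1/2} for a constant C depending only on n. -/
/-!
Restrict `f` to the line `s ↦ x + s • u`. By the mean value theorem on `[0, t]` the slope of `f`
is at most `2 M₀ / t` somewhere on the segment, and the bound on the second derivative moves this
to `s = 0` at a cost of `M₂ ‖u‖² t`. Minimising `A / t + B t` over `t > 0` gives `2 √A √B`, whence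
`‖Df(x)‖ ≤ 2 √2 √M₀ √M₂` in any real normed space.
-/

open Set Filter Topology

lemma le_two_mul_sqrt_mul_sqrt_of_forall_le_div_add_mul {y A B : ℝ} (hA : 0 ≤ A) (hB : 0 ≤ B)
    (h : ∀ t > 0, y ≤ A / t + B * t) : y ≤ 2 * √A * √B := by
  have h_tendsto : Tendsto (fun ε => 2 * (√A + ε) * (√B + ε)) (𝓝[>] 0) (𝓝 (2 * √A * √B)) := by
    have : Continuous fun ε : ℝ => 2 * (√A + ε) * (√B + ε) := by fun_prop
    simpa using (this.tendsto 0).mono_left nhdsWithin_le_nhds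
  refine ge_of_tendsto h_tendsto (eventually_nhdsWithin_of_forall fun ε (hε : 0 < ε) => ?_)
  -- At `t = (√A + ε) / (√B + ε)` both terms are at most `(√A + ε) (√B + ε)`.
  have ha : 0 < √A + ε := by positivity
  have hb : 0 < √B + ε := by positivity
  have hA' : A ≤ (√A + ε) ^ 2 := by
    nlinarith [Real.sq_sqrt hA, Real.sqrt_nonneg A]
  have hB' : B ≤ (√B + ε) ^ 2 := by
    nlinarith [Real.sq_sqrt hB, Real.sqrt_nonneg B]
  calc y ≤ A / ((√A + ε) / (√B + ε)) + B * ((√A + ε) / (√B + ε)) := h _ (by positivity)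
    _ ≤ (√A + ε) ^ 2 / ((√A + ε) / (√B + ε)) + (√B + ε) ^ 2 * ((√A + ε) / (√B + ε)) := by
      gcongr
    _ = 2 * (√A + ε) * (√B + ε) := by
      field_simp
      ring

lemma abs_deriv_zero_le_of_abs_le_of_abs_deriv_le {g g' g'' : ℝ → ℝ} {M K t : ℝ}
    (hg : ∀ s, HasDerivAt g (g' s) s) (hg' : ∀ s, HasDerivAt g' (g'' s) s)
    (hM : ∀ s, |g s| ≤ M) (hK : ∀ s, |g'' s| ≤ K) (ht : 0 < t) :
    |g' 0| ≤ 2 * M / t + K * t := by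
  obtain ⟨c, hc, hc_slope⟩ := exists_hasDerivAt_eq_slope g g' ht
    (fun s _ => (hg s).continuousAt.continuousWithinAt) (fun s _ => hg s)
  have h_at_c : |g' c| ≤ 2 * M / t := by
    rw [hc_slope, sub_zero, abs_div, abs_of_pos ht]
    gcongr
    linarith [abs_sub (g t) (g 0), hM t, hM 0]
  have h_shift : |g' 0 - g' c| ≤ K * t := by
    calc |g' 0 - g' c| ≤ K * ‖(0 : ℝ) - c‖ :=
          Convex.norm_image_sub_le_of_norm_hasDerivWithin_le
            (fun s _ => (hg' s).hasDerivWithinAt) (fun s _ => hK s) convex_univ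
            (mem_univ c) (mem_univ 0)
      _ ≤ K * t := by
          rw [zero_sub, norm_neg, Real.norm_eq_abs, abs_of_pos hc.1]
          exact mul_le_mul_of_nonneg_left hc.2.le ((abs_nonneg _).trans (hK 0))
  linarith [abs_sub_abs_le_abs_sub (g' 0) (g' c)]

section NormedSpace

variable {E : Type*} [NormedAddCommGroup E] [NormedSpace ℝ E]

lemma norm_fderiv_fderiv_apply_le (f : E → ℝ) (x u : E) :
    ‖fderiv ℝ (fderiv ℝ f) x u u‖ ≤ ‖iteratedFDeriv ℝ 2 f x‖ * ‖u‖ ^ 2 := by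
  have h := (iteratedFDeriv ℝ 2 f x).le_opNorm ![u, u]
  rw [iteratedFDeriv_two_apply] at h
  simpa [Fin.prod_univ_two, sq] using h

lemma abs_fderiv_apply_le_of_abs_le_of_norm_iteratedFDeriv_two_le {f : E → ℝ} {M₀ M₂ t : ℝ}
    (hf : ContDiff ℝ 2 f) (h0 : ∀ x, |f x| ≤ M₀) (h2 : ∀ x, ‖iteratedFDeriv ℝ 2 f x‖ ≤ M₂)
    (x u : E) (ht : 0 < t) :
    |fderiv ℝ f x u| ≤ 2 * M₀ / t + M₂ * ‖u‖ ^ 2 * t := by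
  have h_line (s : ℝ) : HasDerivAt (fun s : ℝ => x + s • u) u s := by
    simpa using ((hasDerivAt_id s).smul_const u).const_add x
  have hDf : Differentiable ℝ f := hf.differentiable two_ne_zero
  have hD2f : Differentiable ℝ (fderiv ℝ f) :=
    (hf.fderiv_right (by norm_num)).differentiable one_ne_zero
  have hg' (s : ℝ) : HasDerivAt (fun s : ℝ => fderiv ℝ f (x + s • u) u)
      (fderiv ℝ (fderiv ℝ f) (x + s • u) u u) s := by
    simpa using ((hD2f _).hasFDerivAt.comp_hasDerivAt s (h_line s)).clm_apply
      (hasDerivAt_const s u)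
  simpa using abs_deriv_zero_le_of_abs_le_of_abs_deriv_le
    (fun s => (hDf _).hasFDerivAt.comp_hasDerivAt s (h_line s)) hg' (fun s => h0 _)
    (fun s => (norm_fderiv_fderiv_apply_le f _ u).trans
      (mul_le_mul_of_nonneg_right (h2 _) (by positivity))) ht

theorem norm_fderiv_le_of_abs_le_of_norm_iteratedFDeriv_two_le {f : E → ℝ} {M₀ M₂ : ℝ}
    (hf : ContDiff ℝ 2 f) (h0 : ∀ x, |f x| ≤ M₀) (h2 : ∀ x, ‖iteratedFDeriv ℝ 2 f x‖ ≤ M₂)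
    (x : E) : ‖fderiv ℝ f x‖ ≤ 2 * √2 * √M₀ * √M₂ := by
  have hM₀ : 0 ≤ M₀ := (abs_nonneg _).trans (h0 x)
  have hM₂ : 0 ≤ M₂ := (norm_nonneg _).trans (h2 x)
  refine ContinuousLinearMap.opNorm_le_bound _ (by positivity) fun u => ?_
  have h := le_two_mul_sqrt_mul_sqrt_of_forall_le_div_add_mul (by positivity) (by positivity)
    fun t ht => abs_fderiv_apply_le_of_abs_le_of_norm_iteratedFDeriv_two_le hf h0 h2 x u ht
  rw [Real.sqrt_mul zero_le_two, Real.sqrt_mul hM₂, Real.sqrt_sq (norm_nonneg u)] at h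
  simpa only [Real.norm_eq_abs, mul_assoc] using h

end NormedSpace

/-- Gradient (Landau–Kolmogorov) inequality: for `f : ℝⁿ → ℝ` of class `C²`,
bounded together with its second derivatives,
`‖∂f‖_{L^∞} ≤ C ‖f‖_{L^∞}^{1/2} ‖∂²f‖_{L^∞}^{1/2}` with `C` depending only on `n`. -/
theorem gradient_interpolation_inequality (n : ℕ) :
    ∃ C > 0, ∀ (f : EuclideanSpace ℝ (Fin n) → ℝ) (M₀ M₂ : ℝ),
      ContDiff ℝ 2 f →
      (∀ x, |f x| ≤ M₀) →
      (∀ x, ‖iteratedFDeriv ℝ 2 f x‖ ≤ M₂) →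
      ∀ x, ‖fderiv ℝ f x‖ ≤ C * Real.sqrt M₀ * Real.sqrt M₂ :=
  ⟨2 * √2, by positivity, fun _ _ _ hf h0 h2 x =>
    norm_fderiv_le_of_abs_le_of_norm_iteratedFDeriv_two_le hf h0 h2 x⟩
end

section
/- Let a(·; h) be a family of smooth functions on ℝ^{2n} indexed by h ∈ (0,1) such that for all multi-indices α there are constants C_α with ‖∂^α a(·;h)‖_{L^∞} ≤ C_α, and suppose ‖a(·;h)‖_{L^∞} ≤ C h^α for some α ≥ 0. Then for every ε > 0 there is a constant C_ε with ‖∂a(·;h)‖_{L^∞} ≤ C_ε h^{α(1-ε)} for all h ∈ (0,1). -/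
open Set

/-- Gradient interpolation: if `g` is bounded by `A` and its derivative is `B`-Lipschitz,
then `‖∂g x‖ ≤ 2A/t + Bt` for every `t > 0`. -/
lemma interp_aux {E F : Type*} [NormedAddCommGroup E] [NormedSpace ℝ E]
    [NormedAddCommGroup F] [NormedSpace ℝ F]
    (g : E → F) (hg : Differentiable ℝ g) {A B t : ℝ} (hB : 0 ≤ B) (ht : 0 < t)
    (hA : ∀ x, ‖g x‖ ≤ A)
    (hLip : ∀ y z, ‖fderiv ℝ g y - fderiv ℝ g z‖ ≤ B * ‖y - z‖)
    (x : E) : ‖fderiv ℝ g x‖ ≤ 2 * A / t + B * t := by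
  have hA0 : 0 ≤ A := le_trans (norm_nonneg _) (hA x)
  apply ContinuousLinearMap.opNorm_le_bound'
  · positivity
  intro v hv
  have hv' : 0 < ‖v‖ := lt_of_le_of_ne (norm_nonneg v) (Ne.symm hv)
  set s := t / ‖v‖ with hs
  have hs0 : 0 < s := div_pos ht hv'
  set L := fderiv ℝ g x v with hL
  have key : ∀ u ∈ Icc (0:ℝ) s, HasDerivWithinAt (fun u : ℝ => g (x + u • v) - u • L)
      (fderiv ℝ g (x + u • v) v - L) (Icc (0:ℝ) s) u := by
    intro u _
    have h1 : HasDerivAt (fun u : ℝ => x + u • v) v u := by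
      simpa using ((hasDerivAt_id u).smul_const v).const_add x
    have h2 : HasDerivAt (fun u : ℝ => g (x + u • v)) (fderiv ℝ g (x + u • v) v) u :=
      (hg (x + u • v)).hasFDerivAt.comp_hasDerivAt u h1
    have h3 : HasDerivAt (fun u : ℝ => u • L) L u := by
      simpa using (hasDerivAt_id u).smul_const L
    exact (h2.sub h3).hasDerivWithinAt
  have bound : ∀ u ∈ Ico (0:ℝ) s, ‖fderiv ℝ g (x + u • v) v - L‖ ≤ B * s * ‖v‖ ^ 2 := by
    intro u hu
    have e1 : fderiv ℝ g (x + u • v) v - L = (fderiv ℝ g (x + u • v) - fderiv ℝ g x) v := by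
      simp [hL]
    rw [e1]
    calc ‖(fderiv ℝ g (x + u • v) - fderiv ℝ g x) v‖
        ≤ ‖fderiv ℝ g (x + u • v) - fderiv ℝ g x‖ * ‖v‖ :=
          ContinuousLinearMap.le_opNorm _ v
      _ ≤ (B * ‖x + u • v - x‖) * ‖v‖ :=
          mul_le_mul_of_nonneg_right (hLip _ _) (norm_nonneg v)
      _ = B * u * ‖v‖ ^ 2 := by
          rw [add_sub_cancel_left, norm_smul, Real.norm_eq_abs, abs_of_nonneg hu.1]; ring
      _ ≤ B * s * ‖v‖ ^ 2 := by
          exact mul_le_mul_of_nonneg_right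
            (mul_le_mul_of_nonneg_left hu.2.le hB) (sq_nonneg _)
  have hmain := norm_image_sub_le_of_norm_deriv_le_segment' key bound s
    (right_mem_Icc.2 hs0.le)
  simp only [zero_smul, sub_zero, add_zero] at hmain
  -- hmain : ‖g (x + s • v) - s • L - g x‖ ≤ B * s * ‖v‖ ^ 2 * (s - 0)
  have hsL : s * ‖L‖ ≤ 2 * A + B * s ^ 2 * ‖v‖ ^ 2 := by
    have e : s • L = (g (x + s • v) - g x) - (g (x + s • v) - s • L - g x) := by abel
    have h1 : ‖s • L‖ ≤ (‖g (x + s • v)‖ + ‖g x‖) + ‖g (x + s • v) - s • L - g x‖ := by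
      calc ‖s • L‖ = ‖(g (x + s • v) - g x) - (g (x + s • v) - s • L - g x)‖ := by rw [← e]
        _ ≤ ‖g (x + s • v) - g x‖ + ‖g (x + s • v) - s • L - g x‖ := norm_sub_le _ _
        _ ≤ (‖g (x + s • v)‖ + ‖g x‖) + ‖g (x + s • v) - s • L - g x‖ :=
            add_le_add (norm_sub_le _ _) le_rfl
    have h2 : ‖s • L‖ = s * ‖L‖ := by
      rw [norm_smul, Real.norm_eq_abs, abs_of_nonneg hs0.le]
    have h3 := hA (x + s • v)
    have h4 := hA x
    nlinarith [hmain]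
  have hsv : s * ‖v‖ = t := by
    rw [hs, div_mul_cancel₀ _ hv]
  have hfinal : ‖L‖ ≤ (2 * A / t + B * t) * ‖v‖ := by
    have e : (2 * A / t + B * t) * ‖v‖ = (2 * A + B * t ^ 2) * ‖v‖ / t := by
      rw [eq_div_iff ht.ne']
      have e2 : 2 * A / t * t = 2 * A := div_mul_cancel₀ _ ht.ne'
      linear_combination ‖v‖ * e2
    rw [e, le_div_iff₀ ht]
    have h5 : ‖L‖ * t = (s * ‖L‖) * ‖v‖ := by rw [← hsv]; ring
    have h6 : (2 * A + B * t ^ 2) * ‖v‖ = (2 * A + B * s ^ 2 * ‖v‖ ^ 2) * ‖v‖ := by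
      rw [← hsv]; ring
    rw [h5, h6]
    exact mul_le_mul_of_nonneg_right hsL (norm_nonneg v)
  exact hfinal

/-- A bound on the `(m+1)`-st derivative makes the `m`-th derivative Lipschitz. -/
lemma lip_aux {E F : Type*} [NormedAddCommGroup E] [NormedSpace ℝ E]
    [NormedAddCommGroup F] [NormedSpace ℝ F]
    (f : E → F) (hf : ContDiff ℝ (⊤ : ℕ∞) f) (m : ℕ) {B : ℝ}
    (hB : ∀ x, ‖iteratedFDeriv ℝ (m + 1) f x‖ ≤ B) (y z : E) :
    ‖iteratedFDeriv ℝ m f y - iteratedFDeriv ℝ m f z‖ ≤ B * ‖y - z‖ :=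
  Convex.norm_image_sub_le_of_norm_fderiv_le
    (fun x _ => (hf.differentiable_iteratedFDeriv (by exact_mod_cast ENat.natCast_lt_top m) ).differentiableAt)
    (fun x _ => by rw [norm_fderiv_iteratedFDeriv]; exact hB x)
    convex_univ (Set.mem_univ z) (Set.mem_univ y)

lemma fderiv_iteratedFDeriv_sub_norm {E F : Type*} [NormedAddCommGroup E] [NormedSpace ℝ E]
    [NormedAddCommGroup F] [NormedSpace ℝ F] (f : E → F) (m : ℕ) (y z : E) :
    ‖fderiv ℝ (iteratedFDeriv ℝ m f) y - fderiv ℝ (iteratedFDeriv ℝ m f) z‖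
      = ‖iteratedFDeriv ℝ (m + 1) f y - iteratedFDeriv ℝ (m + 1) f z‖ := by
  conv_rhs => rw [iteratedFDeriv_succ_eq_comp_left]
  simp only [Function.comp_apply]
  rw [← LinearIsometryEquiv.map_sub, LinearIsometryEquiv.norm_map]

/-- Proposition 2 with δ = 0: if a family of smooth symbols `a(·;h)` on `ℝ^{2n}` is
bounded in `S` (all derivatives uniformly bounded in `h`) and `‖a(·;h)‖_∞ = O(h^α)`,
then `‖∂a(·;h)‖_∞ = O(h^{α(1-ε)})` for every `ε > 0`. -/
theorem symbol_first_derivative_bound (n : ℕ)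
    (a : ℝ → EuclideanSpace ℝ (Fin (2 * n)) → ℂ)
    (hsmooth : ∀ h ∈ Ioo (0 : ℝ) 1, ContDiff ℝ (⊤ : ℕ∞) (a h))
    (hS : ∀ k : ℕ, ∃ Ck : ℝ, ∀ h ∈ Ioo (0 : ℝ) 1, ∀ x,
      ‖iteratedFDeriv ℝ k (a h) x‖ ≤ Ck)
    (α : ℝ) (hα : 0 ≤ α) (C : ℝ)
    (hbound : ∀ h ∈ Ioo (0 : ℝ) 1, ∀ x, ‖a h x‖ ≤ C * h ^ α) :
    ∀ ε > 0, ∃ Cε : ℝ, ∀ h ∈ Ioo (0 : ℝ) 1, ∀ x,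
      ‖fderiv ℝ (a h) x‖ ≤ Cε * h ^ (α * (1 - ε)) := by
  intro ε hε
  choose D hD using hS
  have hhalf : (1/2 : ℝ) ∈ Ioo (0:ℝ) 1 := by norm_num
  have hDnn : ∀ k, 0 ≤ D k := fun k => le_trans (norm_nonneg _) (hD k _ hhalf 0)
  have hCnn : 0 ≤ C := by
    have h1 := hbound _ hhalf 0
    have hp : (0:ℝ) < (1/2:ℝ) ^ α := Real.rpow_pos_of_pos (by norm_num) _
    nlinarith [norm_nonneg (a (1/2) 0)]
  set j := max 1 ⌈1/ε⌉₊ with hjdef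
  have hj1 : 1 ≤ j := le_max_left _ _
  set M := 9 ^ (j * (j + 1)) * C ^ j * D (j + 1) with hMdef
  have hMnn : 0 ≤ M :=
    mul_nonneg (mul_nonneg (by positivity) (pow_nonneg hCnn j)) (hDnn (j+1))
  refine ⟨M ^ ((1:ℝ)/(j+1)), ?_⟩
  intro h hh x
  obtain ⟨hh0, hh1⟩ := hh
  have hmem : h ∈ Ioo (0:ℝ) 1 := ⟨hh0, hh1⟩
  set S : ℕ → ℝ := fun k => ⨆ y, ‖iteratedFDeriv ℝ k (a h) y‖ with hSdef
  have hbdd : ∀ k, BddAbove (Set.range fun y => ‖iteratedFDeriv ℝ k (a h) y‖) := by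
    intro k
    refine ⟨D k, ?_⟩
    rintro _ ⟨y, rfl⟩
    exact hD k h hmem y
  have hle : ∀ k y, ‖iteratedFDeriv ℝ k (a h) y‖ ≤ S k := fun k y => le_ciSup (hbdd k) y
  have hSnn : ∀ k, 0 ≤ S k := fun k => le_trans (norm_nonneg _) (hle k 0)
  have hSD : ∀ k, S k ≤ D k := fun k => ciSup_le (fun y => hD k h hmem y)
  have hS0 : S 0 ≤ C * h ^ α := by
    refine ciSup_le fun y => ?_
    rw [norm_iteratedFDeriv_zero]
    exact hbound h hmem y
  -- interpolation inequality between consecutive derivatives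
  have hinterp : ∀ k : ℕ, ∀ t : ℝ, 0 < t → S (k+1) ≤ 2 * S k / t + S (k+2) * t := by
    intro k t ht
    refine ciSup_le fun y => ?_
    rw [← norm_fderiv_iteratedFDeriv]
    refine interp_aux (iteratedFDeriv ℝ k (a h))
      ((hsmooth h hmem).differentiable_iteratedFDeriv (by exact_mod_cast ENat.natCast_lt_top k))
      (hSnn (k+2)) ht (hle k) ?_ y
    intro y' z'
    rw [fderiv_iteratedFDeriv_sub_norm]
    exact lip_aux (a h) (hsmooth h hmem) (k+1) (hle (k+2)) y' z'
  -- squared interpolation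
  have hsq : ∀ k : ℕ, S (k+1) ^ 2 ≤ 9 * (S k * S (k+2)) := by
    intro k
    rcases eq_or_lt_of_le (hSnn k) with hk0 | hk0
    · -- S k = 0 : then S (k+1) = 0
      have hz : S (k+1) = 0 := by
        by_contra hne
        have hpos : 0 < S (k+1) := lt_of_le_of_ne (hSnn (k+1)) (Ne.symm hne)
        rcases eq_or_lt_of_le (hSnn (k+2)) with hk2 | hk2
        · have := hinterp k 1 one_pos
          rw [← hk0, ← hk2] at this
          simp at this
          linarith
        · have ht : 0 < S (k+1) / (2 * S (k+2)) := div_pos hpos (by linarith)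
          have := hinterp k _ ht
          rw [← hk0] at this
          have he : 2 * 0 / (S (k+1) / (2 * S (k+2))) +
              S (k+2) * (S (k+1) / (2 * S (k+2))) = S (k+1) / 2 := by
            field_simp
            ring
          rw [he] at this
          linarith
      rw [hz, ← hk0]
      norm_num
    rcases eq_or_lt_of_le (hSnn (k+2)) with hk2 | hk2
    · -- S (k+2) = 0 : then S (k+1) = 0
      have hz : S (k+1) = 0 := by
        by_contra hne
        have hpos : 0 < S (k+1) := lt_of_le_of_ne (hSnn (k+1)) (Ne.symm hne)
        have ht : 0 < 4 * S k / S (k+1) := div_pos (by linarith) hpos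
        have := hinterp k _ ht
        rw [← hk2] at this
        have he : 2 * S k / (4 * S k / S (k+1)) + 0 * (4 * S k / S (k+1)) = S (k+1) / 2 := by
          field_simp
          ring
        rw [he] at this
        linarith
      rw [hz, ← hk2]
      norm_num
    · -- both positive : optimize t
      set p := Real.sqrt (S k) with hp
      set q := Real.sqrt (S (k+2)) with hq
      have hp0 : 0 < p := Real.sqrt_pos.2 hk0
      have hq0 : 0 < q := Real.sqrt_pos.2 hk2
      have hpp : p * p = S k := Real.mul_self_sqrt (hSnn k)
      have hqq : q * q = S (k+2) := Real.mul_self_sqrt (hSnn (k+2))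
      have ht : 0 < p / q := div_pos hp0 hq0
      have hkey := hinterp k _ ht
      have e1 : 2 * S k / (p / q) = 2 * (p * q) := by
        rw [← hpp]; field_simp
      have e2 : S (k+2) * (p / q) = p * q := by
        rw [← hqq]; field_simp
      rw [e1, e2] at hkey
      -- hkey : S (k+1) ≤ 2(pq) + pq = 3 pq
      have hkey' : S (k+1) ≤ 3 * (p * q) := by linarith
      calc S (k+1) ^ 2 ≤ (3 * (p * q)) ^ 2 :=
            pow_le_pow_left₀ (hSnn (k+1)) hkey' 2
        _ = 9 * ((p * p) * (q * q)) := by ring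
        _ = 9 * (S k * S (k+2)) := by rw [hpp, hqq]
  -- multiplicative chain
  have hQ : ∀ k : ℕ, 1 ≤ k → S 1 * S k ≤ 9 ^ k * (S 0 * S (k+1)) := by
    intro k hk
    induction k with
    | zero => omega
    | succ m ih =>
      by_cases hm : m = 0
      · subst hm
        have := hsq 0
        calc S 1 * S 1 = S 1 ^ 2 := (sq (S 1)).symm
          _ ≤ 9 * (S 0 * S 2) := hsq 0
          _ = 9 ^ 1 * (S 0 * S (1+1)) := by norm_num
      · have hm1 : 1 ≤ m := Nat.one_le_iff_ne_zero.2 hm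
        have ihm := ih hm1
        by_cases hz : S (m+1) = 0
        · rw [hz, mul_zero]
          have : (0:ℝ) ≤ 9 ^ (m+1) * (S 0 * S (m+2)) := by
            apply mul_nonneg (by positivity) (mul_nonneg (hSnn 0) (hSnn _))
          linarith
        · have hpos : 0 < S (m+1) := lt_of_le_of_ne (hSnn (m+1)) (Ne.symm hz)
          rw [← mul_le_mul_iff_of_pos_right hpos]
          calc S 1 * S (m+1) * S (m+1) = S 1 * S (m+1) ^ 2 := by ring
            _ ≤ S 1 * (9 * (S m * S (m+2))) :=
                mul_le_mul_of_nonneg_left (hsq m) (hSnn 1)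
            _ = (9 * S (m+2)) * (S 1 * S m) := by ring
            _ ≤ (9 * S (m+2)) * (9 ^ m * (S 0 * S (m+1))) := by
                apply mul_le_mul_of_nonneg_left ihm
                exact mul_nonneg (by norm_num) (hSnn _)
            _ = 9 ^ (m+1) * (S 0 * S (m+1+1)) * S (m+1) := by ring
  have hR : ∀ k : ℕ, S 1 ^ (k+1) ≤ 9 ^ (k * (k+1)) * (S 0 ^ k * S (k+1)) := by
    intro k
    induction k with
    | zero => simp
    | succ m ih =>
      calc S 1 ^ (m+2) = S 1 ^ (m+1) * S 1 := by ring
        _ ≤ (9 ^ (m*(m+1)) * (S 0 ^ m * S (m+1))) * S 1 :=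
            mul_le_mul_of_nonneg_right ih (hSnn 1)
        _ = 9 ^ (m*(m+1)) * S 0 ^ m * (S 1 * S (m+1)) := by ring
        _ ≤ 9 ^ (m*(m+1)) * S 0 ^ m * (9 ^ (m+1) * (S 0 * S (m+2))) := by
            apply mul_le_mul_of_nonneg_left (hQ (m+1) (by omega))
            exact mul_nonneg (by positivity) (pow_nonneg (hSnn 0) m)
        _ = 9 ^ (m*(m+1) + (m+1)) * (S 0 ^ (m+1) * S (m+2)) := by rw [pow_add]; ring
        _ ≤ 9 ^ ((m+1)*(m+2)) * (S 0 ^ (m+1) * S (m+2)) := by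
            apply mul_le_mul_of_nonneg_right
            · exact pow_le_pow_right₀ (by norm_num) (by nlinarith)
            · exact mul_nonneg (pow_nonneg (hSnn 0) _) (hSnn _)
  -- combine
  have hhα : (0:ℝ) ≤ h ^ α := Real.rpow_nonneg hh0.le α
  have h1 : S 1 ^ (j+1) ≤ M * (h ^ α) ^ j := by
    calc S 1 ^ (j+1) ≤ 9 ^ (j*(j+1)) * (S 0 ^ j * S (j+1)) := hR j
      _ ≤ 9 ^ (j*(j+1)) * ((C * h ^ α) ^ j * D (j+1)) := by
          apply mul_le_mul_of_nonneg_left _ (by positivity)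
          exact mul_le_mul (pow_le_pow_left₀ (hSnn 0) hS0 j) (hSD (j+1)) (hSnn _)
            (pow_nonneg (mul_nonneg hCnn hhα) j)
      _ = M * (h ^ α) ^ j := by rw [hMdef, mul_pow]; ring
  have hj1R : (0:ℝ) < (j:ℝ) + 1 := by positivity
  have hroot : S 1 ≤ M ^ ((1:ℝ)/(j+1)) * h ^ (α * j / (j+1)) := by
    have hstep : S 1 = (S 1 ^ (j+1)) ^ ((1:ℝ)/(j+1)) := by
      rw [← Real.rpow_natCast (S 1) (j+1), ← Real.rpow_mul (hSnn 1)]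
      push_cast [mul_one_div]
      rw [div_self (ne_of_gt hj1R), Real.rpow_one]
    rw [hstep]
    have h2 : (S 1 ^ (j+1)) ^ ((1:ℝ)/(j+1)) ≤ (M * (h ^ α) ^ j) ^ ((1:ℝ)/(j+1)) :=
      Real.rpow_le_rpow (pow_nonneg (hSnn 1) _) h1 (by positivity)
    refine h2.trans_eq ?_
    rw [Real.mul_rpow hMnn (pow_nonneg hhα j)]
    congr 1
    rw [← Real.rpow_natCast (h ^ α) j, ← Real.rpow_mul hh0.le,
      ← Real.rpow_mul hh0.le]
    congr 1
    ring
  -- exponent comparison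
  have hexp : α * (1 - ε) ≤ α * j / (j+1) := by
    have hj' : 1 / ε ≤ (j:ℝ) := by
      have h3 : (1:ℝ)/ε ≤ (⌈1/ε⌉₊ : ℝ) := Nat.le_ceil _
      have h4 : ((⌈1/ε⌉₊ : ℕ) : ℝ) ≤ (j : ℝ) := by
        exact_mod_cast Nat.cast_le.mpr (le_max_right 1 ⌈1/ε⌉₊)
      linarith
    have h5 : 1 - ε ≤ (j:ℝ)/(j+1) := by
      rw [le_div_iff₀ hj1R]
      have h6 : 1 ≤ ε * (j:ℝ) := by
        rw [div_le_iff₀ hε] at hj'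
        linarith
      nlinarith
    calc α * (1 - ε) ≤ α * ((j:ℝ)/(j+1)) :=
          mul_le_mul_of_nonneg_left h5 hα
      _ = α * j / (j+1) := by ring
  have hmono : h ^ (α * j / (j+1)) ≤ h ^ (α * (1 - ε)) :=
    Real.rpow_le_rpow_of_exponent_ge hh0 hh1.le hexp
  -- finish
  have hfd : ‖fderiv ℝ (a h) x‖ = ‖iteratedFDeriv ℝ 1 (a h) x‖ := by
    rw [← norm_iteratedFDeriv_fderiv, norm_iteratedFDeriv_zero]
  calc ‖fderiv ℝ (a h) x‖ = ‖iteratedFDeriv ℝ 1 (a h) x‖ := hfd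
    _ ≤ S 1 := hle 1 x
    _ ≤ M ^ ((1:ℝ)/(j+1)) * h ^ (α * j / (j+1)) := hroot
    _ ≤ M ^ ((1:ℝ)/(j+1)) * h ^ (α * (1 - ε)) :=
        mul_le_mul_of_nonneg_left hmono (Real.rpow_nonneg hMnn _)
end

section
/- Let a(·;h) be a family of smooth functions on ℝ^{2n} with, for a fixed δ ≥ 0, bounds ‖∂^α a(·;h)‖_{L^∞} ≤ C_α h^{-δ|α|} for all multi-indices α and all h ∈ (0,1). If ‖a(·;h)‖_{L^∞} ≤ C h^α with α ≥ 0, then for every ε > 0 and every multi-index β there is C with ‖∂^β a(·;h)‖_{L^∞} ≤ C h^{α(1-ε) - δ|β|}. -/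
open Set Finset

section landau
variable {E V : Type*} [NormedAddCommGroup E] [NormedSpace ℝ E]
  [NormedAddCommGroup V] [NormedSpace ℝ V]

lemma landau_pointwise (f : E → V) (hf : ContDiff ℝ (⊤ : ℕ∞) f) {A B : ℝ}
    (hA : ∀ x, ‖f x‖ ≤ A) (hB : ∀ x, ‖fderiv ℝ (fderiv ℝ f) x‖ ≤ B)
    {t : ℝ} (ht : 0 < t) (x : E) : ‖fderiv ℝ f x‖ ≤ 2 * A / t + B * t := by
  have hA0 : 0 ≤ A := le_trans (norm_nonneg _) (hA x)
  have hB0 : 0 ≤ B := le_trans (norm_nonneg (fderiv ℝ (fderiv ℝ f) x)) (hB x)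
  have hC : 0 ≤ 2 * A / t + B * t := by positivity
  have hfd : Differentiable ℝ f := hf.differentiable (by simp)
  have hfd1 : Differentiable ℝ (fderiv ℝ f) :=
    (hf.fderiv_right (m := (⊤ : ℕ∞)) (by simp)).differentiable (by simp)
  refine ContinuousLinearMap.opNorm_le_of_unit_norm hC fun v hv => ?_
  have hlip : ∀ y z : E, ‖fderiv ℝ f y - fderiv ℝ f z‖ ≤ B * ‖y - z‖ := fun y z =>
    convex_univ.norm_image_sub_le_of_norm_fderiv_le (fun w _ => hfd1 w)
      (fun w _ => hB w) trivial trivial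
  set c : V := fderiv ℝ f x v with hc
  set φ : ℝ → V := fun s => f (x + s • v) - s • c with hφ
  have hderiv : ∀ s : ℝ, HasDerivAt φ (fderiv ℝ f (x + s • v) v - c) s := by
    intro s
    have h1 : HasDerivAt (fun s : ℝ => x + s • v) v s := by
      simpa using ((hasDerivAt_id s).smul_const v).const_add x
    have h2 : HasFDerivAt f (fderiv ℝ f (x + s • v)) (x + s • v) := (hfd _).hasFDerivAt
    have h3 : HasDerivAt (fun s : ℝ => f (x + s • v)) (fderiv ℝ f (x + s • v) v) s :=
      h2.comp_hasDerivAt s h1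
    have h4 : HasDerivAt (fun s : ℝ => s • c) c s := by
      simpa using (hasDerivAt_id s).smul_const c
    exact h3.sub h4
  have key : ‖φ t - φ 0‖ ≤ B * t * (t - 0) := by
    refine norm_image_sub_le_of_norm_deriv_le_segment'
      (f' := fun s => fderiv ℝ f (x + s • v) v - c)
      (fun s _ => (hderiv s).hasDerivWithinAt) ?_ t (right_mem_Icc.2 ht.le)
    intro s hs
    have hv' : ‖fderiv ℝ f (x + s • v) v - c‖
        ≤ ‖fderiv ℝ f (x + s • v) - fderiv ℝ f x‖ * ‖v‖ := by
      rw [hc]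
      have := (fderiv ℝ f (x + s • v) - fderiv ℝ f x).le_opNorm v
      simpa using this
    have hsv : ‖(x + s • v) - x‖ ≤ t := by
      simp only [add_sub_cancel_left, norm_smul, hv, mul_one, Real.norm_eq_abs]
      rw [abs_of_nonneg hs.1]
      exact hs.2.le
    calc ‖fderiv ℝ f (x + s • v) v - c‖
        ≤ ‖fderiv ℝ f (x + s • v) - fderiv ℝ f x‖ * ‖v‖ := hv'
      _ ≤ (B * ‖(x + s • v) - x‖) * ‖v‖ := by
          apply mul_le_mul_of_nonneg_right (hlip _ _) (norm_nonneg v)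
      _ ≤ B * t := by
          rw [hv, mul_one]
          exact mul_le_mul_of_nonneg_left hsv hB0
  have hid : t • c = (f (x + t • v) - f x) - (φ t - φ 0) := by
    simp only [hφ]
    simp
  have hnorm : t * ‖c‖ ≤ 2 * A + B * t * t := by
    have : ‖t • c‖ ≤ ‖f (x + t • v) - f x‖ + ‖φ t - φ 0‖ := by
      rw [hid]; exact norm_sub_le _ _
    have h5 : ‖f (x + t • v) - f x‖ ≤ 2 * A := by
      calc ‖f (x + t • v) - f x‖ ≤ ‖f (x + t • v)‖ + ‖f x‖ := norm_sub_le _ _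
        _ ≤ A + A := add_le_add (hA _) (hA _)
        _ = 2 * A := by ring
    have h6 : ‖t • c‖ = t * ‖c‖ := by
      rw [norm_smul, Real.norm_eq_abs, abs_of_pos ht]
    rw [h6] at this
    have := this.trans (add_le_add h5 key)
    linarith
  have : ‖c‖ ≤ (2 * A + B * t * t) / t := by
    rw [le_div_iff₀ ht]
    linarith [hnorm]
  calc ‖fderiv ℝ f x v‖ = ‖c‖ := rfl
    _ ≤ (2 * A + B * t * t) / t := this
    _ = 2 * A / t + B * t := by field_simp

lemma landau_iterated (f : E → V) (hf : ContDiff ℝ (⊤ : ℕ∞) f) (k : ℕ) {A B : ℝ}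
    (hA : ∀ x, ‖iteratedFDeriv ℝ k f x‖ ≤ A)
    (hB : ∀ x, ‖iteratedFDeriv ℝ (k + 2) f x‖ ≤ B)
    {t : ℝ} (ht : 0 < t) (x : E) :
    ‖iteratedFDeriv ℝ (k + 1) f x‖ ≤ 2 * A / t + B * t := by
  have hg : ContDiff ℝ (⊤ : ℕ∞) (iteratedFDeriv ℝ k f) := hf.iteratedFDeriv_right (by exact_mod_cast le_top)
  rw [← norm_fderiv_iteratedFDeriv]
  refine landau_pointwise _ hg hA (fun y => ?_) ht x
  have e1 : fderiv ℝ (iteratedFDeriv ℝ k f) =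
      (continuousMultilinearCurryLeftEquiv ℝ (fun _ : Fin (k + 1) => E) V) ∘
        iteratedFDeriv ℝ (k + 1) f := fderiv_iteratedFDeriv
  rw [e1, LinearIsometryEquiv.comp_fderiv']
  beta_reduce
  have hB0 : (0:ℝ) ≤ B := le_trans (norm_nonneg _) (hB y)
  refine ContinuousLinearMap.opNorm_le_bound _ hB0 fun w => ?_
  simp only [ContinuousLinearMap.comp_apply, ContinuousLinearEquiv.coe_coe,
    LinearIsometryEquiv.coe_toContinuousLinearEquiv, LinearIsometryEquiv.norm_map]
  calc ‖fderiv ℝ (iteratedFDeriv ℝ (k + 1) f) y w‖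
      ≤ ‖fderiv ℝ (iteratedFDeriv ℝ (k + 1) f) y‖ * ‖w‖ :=
        ContinuousLinearMap.le_opNorm _ w
    _ ≤ B * ‖w‖ := by
        apply mul_le_mul_of_nonneg_right _ (norm_nonneg w)
        rw [norm_fderiv_iteratedFDeriv]
        exact hB y

end landau
lemma sq_le_of_landau_bound {M A B : ℝ} (hM : 0 ≤ M) (hA : 0 ≤ A) (hB : 0 ≤ B)
    (h : ∀ t : ℝ, 0 < t → M ≤ 2 * A / t + B * t) : M ^ 2 ≤ 9 * (A * B) := by
  rcases eq_or_lt_of_le hB with hB0 | hBpos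
  · -- B = 0 : M = 0
    have hM0 : M ≤ 0 := by
      by_contra h'
      push_neg at h'
      have ht : (0:ℝ) < (2 * A + 1) / M := by positivity
      have := h _ ht
      rw [← hB0, zero_mul, add_zero, div_div_eq_mul_div,
        le_div_iff₀ (by positivity : (0:ℝ) < 2 * A + 1)] at this
      nlinarith
    have : M = 0 := le_antisymm hM0 hM
    rw [this]
    norm_num
    positivity
  rcases eq_or_lt_of_le hA with hA0 | hApos
  · -- A = 0 : M = 0
    have hM0 : M ≤ 0 := by
      by_contra h'
      push_neg at h'
      have ht : (0:ℝ) < M / (2 * B) := by positivity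
      have := h _ ht
      rw [← hA0, mul_zero, zero_div, zero_add] at this
      have h2 : B * (M / (2 * B)) = M / 2 := by field_simp
      nlinarith
    have : M = 0 := le_antisymm hM0 hM
    rw [this]
    norm_num
    positivity
  · set sa := Real.sqrt A with hsa
    set sb := Real.sqrt B with hsb
    have hsa0 : 0 < sa := Real.sqrt_pos.2 hApos
    have hsb0 : 0 < sb := Real.sqrt_pos.2 hBpos
    have hsaA : sa ^ 2 = A := Real.sq_sqrt hA
    have hsbB : sb ^ 2 = B := Real.sq_sqrt hB
    have ht : (0:ℝ) < sa / sb := by positivity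
    have h1 := h _ ht
    have heq : 2 * A / (sa / sb) + B * (sa / sb) = 3 * (sa * sb) := by
      rw [← hsaA, ← hsbB]
      field_simp
      ring
    rw [heq] at h1
    nlinarith [h1, mul_pos hsa0 hsb0]

lemma chord_seq (N : ℕ) (c : ℕ → ℝ)
    (hconv : ∀ j, j + 2 ≤ N → 2 * c (j + 1) ≤ c j + c (j + 2)) :
    ∀ j ≤ N, (N : ℝ) * c j ≤ ((N : ℝ) - j) * c 0 + (j : ℝ) * c N := by
  set d : ℕ → ℝ := fun i => c (i + 1) - c i with hd
  have dstep : ∀ i, i + 2 ≤ N → d i ≤ d (i + 1) := by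
    intro i hi
    have := hconv i hi
    simp only [hd]
    linarith
  have dmono : ∀ i j, i ≤ j → j + 1 ≤ N → d i ≤ d j := by
    intro i j hij hj
    induction j with
    | zero => simp_all
    | succ m ih =>
      rcases Nat.lt_or_ge i (m + 1) with hlt | hge
      · exact le_trans (ih (Nat.lt_succ_iff.1 hlt) (by omega)) (dstep m (by omega))
      · have : i = m + 1 := le_antisymm hij hge
        rw [this]
  have tel : ∀ j, c j - c 0 = ∑ i ∈ range j, d i := by
    intro j
    rw [hd, Finset.sum_range_sub (fun i => c i)]
  intro j hj
  rcases Nat.eq_zero_or_pos j with rfl | hj1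
  · simp
  rcases eq_or_lt_of_le hj with rfl | hjN
  · push_cast
    ring_nf
    exact le_refl _
  -- now 1 ≤ j ≤ N - 1
  have key : ((N : ℝ) - j) * ∑ i ∈ range j, d i ≤ (j : ℝ) * ∑ i ∈ Ico j N, d i := by
    have h1 : ∑ i ∈ range j, d i ≤ (j : ℝ) * d (j - 1) := by
      calc ∑ i ∈ range j, d i ≤ ∑ i ∈ range j, d (j - 1) := by
            apply Finset.sum_le_sum
            intro i hi
            have hi' := Finset.mem_range.1 hi
            exact dmono i (j - 1) (by omega) (by omega)
        _ = (j : ℝ) * d (j - 1) := by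
            rw [Finset.sum_const, card_range, nsmul_eq_mul]
    have h2 : ((N : ℝ) - j) * d (j - 1) ≤ ∑ i ∈ Ico j N, d i := by
      calc ((N : ℝ) - j) * d (j - 1) = ((N - j : ℕ) : ℝ) * d (j - 1) := by
            rw [Nat.cast_sub hj]
        _ = ∑ _i ∈ Ico j N, d (j - 1) := by
            rw [Finset.sum_const, Nat.card_Ico, nsmul_eq_mul]
        _ ≤ ∑ i ∈ Ico j N, d i := by
            apply Finset.sum_le_sum
            intro i hi
            rw [Finset.mem_Ico] at hi
            exact dmono (j - 1) i (by omega) (by omega)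
    have hNj : (0:ℝ) ≤ (N : ℝ) - j := by
      have : (j:ℝ) ≤ N := by exact_mod_cast hj
      linarith
    have hj0 : (0:ℝ) ≤ (j : ℝ) := Nat.cast_nonneg j
    calc ((N : ℝ) - j) * ∑ i ∈ range j, d i ≤ ((N : ℝ) - j) * ((j : ℝ) * d (j - 1)) :=
          mul_le_mul_of_nonneg_left h1 hNj
      _ = (j : ℝ) * (((N : ℝ) - j) * d (j - 1)) := by ring
      _ ≤ (j : ℝ) * ∑ i ∈ Ico j N, d i := mul_le_mul_of_nonneg_left h2 hj0
  -- conclude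
  have split : ∑ i ∈ range N, d i = ∑ i ∈ range j, d i + ∑ i ∈ Ico j N, d i := by
    rw [Finset.range_eq_Ico, ← Finset.sum_Ico_consecutive _ (Nat.zero_le j) hj,
      ← Finset.range_eq_Ico]
  have t1 := tel j
  have t2 := tel N
  rw [split] at t2
  nlinarith [key, t1, t2]
lemma interp_seq (N : ℕ) (hN : 1 ≤ N) (s : ℕ → ℝ) (hs : ∀ j, 0 ≤ s j)
    (hrec : ∀ j, j + 2 ≤ N → (s (j + 1)) ^ 2 ≤ 9 * (s j * s (j + 2))) :
    ∀ j ≤ N, (s j) ^ N ≤ 9 ^ (N ^ 3) * ((s 0) ^ (N - j) * (s N) ^ j) := by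
  have h9 : (1 : ℝ) ≤ 9 ^ (N ^ 3) := one_le_pow₀ (by norm_num)
  have endpoint0 : (s 0) ^ N ≤ 9 ^ (N ^ 3) * ((s 0) ^ (N - 0) * (s N) ^ 0) := by
    simp only [Nat.sub_zero, pow_zero, mul_one]
    exact le_mul_of_one_le_left (pow_nonneg (hs 0) N) h9
  have endpointN : (s N) ^ N ≤ 9 ^ (N ^ 3) * ((s 0) ^ (N - N) * (s N) ^ N) := by
    simp only [Nat.sub_self, pow_zero, one_mul]
    exact le_mul_of_one_le_left (pow_nonneg (hs N) N) h9
  intro j hj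
  rcases Nat.eq_zero_or_pos j with rfl | hj1
  · exact endpoint0
  rcases eq_or_lt_of_le hj with rfl | hjN
  · exact endpointN
  -- middle: 1 ≤ j < N
  by_cases hzero : ∃ i, 1 ≤ i ∧ i < N ∧ s i = 0
  · -- all middle terms vanish
    obtain ⟨i, hi1, hiN, hiz⟩ := hzero
    have down : ∀ q, 1 ≤ i - q → s (i - q) = 0 := by
      intro q
      induction q with
      | zero => intro _; simpa using hiz
      | succ p ih =>
        intro hq
        obtain ⟨m, hm⟩ : ∃ m, i - p = m + 2 := ⟨i - p - 2, by omega⟩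
        have h0 : s (i - p) = 0 := ih (by omega)
        have := hrec m (by omega)
        rw [← hm, h0] at this
        have h1 : s (m + 1) ^ 2 ≤ 0 := by simpa using this
        have h2 : s (m + 1) = 0 := by nlinarith [hs (m + 1), sq_nonneg (s (m + 1))]
        have : i - (p + 1) = m + 1 := by omega
        rw [this, h2]
    have s1 : s 1 = 0 := by
      have := down (i - 1) (by omega)
      rwa [show i - (i - 1) = 1 by omega] at this
    have up : ∀ m, 1 ≤ m → m < N → s m = 0 := by
      intro m
      induction m with
      | zero => omega
      | succ p ih =>
        intro _ hpN
        rcases Nat.eq_zero_or_pos p with rfl | hp1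
        · exact s1
        have h0 : s p = 0 := ih hp1 (by omega)
        have := hrec p (by omega)
        rw [h0] at this
        have h1 : s (p + 1) ^ 2 ≤ 0 := by simpa using this
        nlinarith [hs (p + 1), sq_nonneg (s (p + 1))]
    have : s j = 0 := up j hj1 hjN
    rw [this, zero_pow (by omega : N ≠ 0)]
    exact mul_nonneg (pow_nonneg (by norm_num) _)
      (mul_nonneg (pow_nonneg (hs 0) _) (pow_nonneg (hs N) _))
  · -- all middle terms positive
    push_neg at hzero
    have hmidpos : ∀ i, 1 ≤ i → i < N → 0 < s i := by
      intro i h1 h2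
      rcases (hs i).lt_or_eq with h | h
      · exact h
      · exact absurd h.symm (hzero i h1 h2)
    have hN2 : 2 ≤ N := by omega
    obtain ⟨p, hp⟩ : ∃ p, N = p + 2 := ⟨N - 2, by omega⟩
    have pos0 : 0 < s 0 := by
      rcases (hs 0).lt_or_eq with h | h
      · exact h
      · exfalso
        have := hrec 0 (by omega)
        rw [← h] at this
        have h1 : s 1 ^ 2 ≤ 0 := by simpa using this
        have := hmidpos 1 le_rfl (by omega)
        nlinarith
    have posN : 0 < s N := by
      rcases (hs N).lt_or_eq with h | h
      · exact h
      · exfalso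
        have hr := hrec p (by omega)
        rw [show p + 2 = N from hp.symm, ← h, mul_zero, mul_zero] at hr
        have hmid : 0 < s (p + 1) := hmidpos (p + 1) (by omega) (by omega)
        nlinarith
    have pos : ∀ i ≤ N, 0 < s i := by
      intro i hi
      rcases Nat.eq_zero_or_pos i with rfl | h1
      · exact pos0
      rcases eq_or_lt_of_le hi with rfl | h2
      · exact posN
      · exact hmidpos i h1 h2
    set L := Real.log 9 with hL
    have hL0 : 0 ≤ L := Real.log_nonneg (by norm_num)
    set c : ℕ → ℝ := fun m => Real.log (s m) + (m : ℝ) ^ 2 * L with hc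
    have hconv : ∀ q, q + 2 ≤ N → 2 * c (q + 1) ≤ c q + c (q + 2) := by
      intro q hq
      have hq1 : 0 < s (q + 1) := pos _ (by omega)
      have hq0 : 0 < s q := pos _ (by omega)
      have hq2 : 0 < s (q + 2) := pos _ (by omega)
      have hlog := Real.log_le_log (by positivity) (hrec q hq)
      rw [Real.log_pow, Real.log_mul (by norm_num) (by positivity),
        Real.log_mul (ne_of_gt hq0) (ne_of_gt hq2)] at hlog
      simp only [hc]
      push_cast at hlog ⊢
      have hcoef : (2 * ((q : ℝ) + 1) ^ 2 + 1) * L ≤ ((q : ℝ) ^ 2 + ((q : ℝ) + 2) ^ 2) * L := by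
        apply mul_le_mul_of_nonneg_right _ hL0
        nlinarith
      nlinarith [hlog, hcoef]
    have hchord := chord_seq N c hconv j hj
    simp only [hc] at hchord
    have hcast : ((N - j : ℕ) : ℝ) = (N : ℝ) - j := Nat.cast_sub hj
    have hjN' : (j : ℝ) ≤ (N : ℝ) := by exact_mod_cast hj
    have hkey : (N : ℝ) * Real.log (s j) ≤
        ((N - j : ℕ) : ℝ) * Real.log (s 0) + (j : ℝ) * Real.log (s N)
          + ((N : ℝ) ^ 3) * L := by
      rw [hcast]
      have hN0 : (0:ℝ) ≤ (N : ℝ) := Nat.cast_nonneg N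
      have hj0 : (0:ℝ) ≤ (j : ℝ) := Nat.cast_nonneg j
      have hbound : ((j : ℝ) * (N : ℝ) ^ 2 - (N : ℝ) * (j : ℝ) ^ 2) * L ≤ (N : ℝ) ^ 3 * L := by
        apply mul_le_mul_of_nonneg_right _ hL0
        have h1 : (j : ℝ) * (N : ℝ) ^ 2 ≤ (N : ℝ) * (N : ℝ) ^ 2 :=
          mul_le_mul_of_nonneg_right hjN' (by positivity)
        nlinarith [mul_nonneg hN0 (sq_nonneg (j : ℝ))]
      simp only [Nat.cast_zero] at hchord
      ring_nf at hchord hbound ⊢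
      linarith [hchord, hbound]
    -- exponentiate
    have hexp := Real.exp_le_exp.2 hkey
    rw [Real.exp_add, Real.exp_add] at hexp
    have e1 : Real.exp ((N : ℝ) * Real.log (s j)) = s j ^ N := by
      rw [Real.exp_nat_mul, Real.exp_log (pos j hj)]
    have e2 : Real.exp (((N - j : ℕ) : ℝ) * Real.log (s 0)) = s 0 ^ (N - j) := by
      rw [Real.exp_nat_mul, Real.exp_log pos0]
    have e3 : Real.exp ((j : ℝ) * Real.log (s N)) = s N ^ j := by
      rw [Real.exp_nat_mul, Real.exp_log posN]
    have e4 : Real.exp ((N : ℝ) ^ 3 * L) = 9 ^ (N ^ 3) := by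
      rw [hL, show ((N : ℝ) ^ 3) = ((N ^ 3 : ℕ) : ℝ) by push_cast; ring,
        Real.exp_nat_mul, Real.exp_log (by norm_num)]
    rw [e1, e2, e3, e4] at hexp
    calc (s j) ^ N ≤ s 0 ^ (N - j) * s N ^ j * 9 ^ (N ^ 3) := hexp
      _ = 9 ^ (N ^ 3) * ((s 0) ^ (N - j) * (s N) ^ j) := by ring

/-- Corollary 3: a symbol family in the class `S_δ` which is `O(h^α)` in `L^∞` is
`O_{S_δ}(h^{α(1-ε)})` for every `ε > 0`: all derivatives of order `|β| = k` are
`O(h^{α(1-ε) - δ k})`. -/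
theorem symbol_class_improvement (n : ℕ) (δ : ℝ) (hδ : 0 ≤ δ)
    (a : ℝ → EuclideanSpace ℝ (Fin (2 * n)) → ℂ)
    (hsmooth : ∀ h ∈ Ioo (0 : ℝ) 1, ContDiff ℝ (⊤ : ℕ∞) (a h))
    (hS : ∀ k : ℕ, ∃ Ck : ℝ, ∀ h ∈ Ioo (0 : ℝ) 1, ∀ x,
      ‖iteratedFDeriv ℝ k (a h) x‖ ≤ Ck * h ^ (-(δ * k)))
    (α : ℝ) (hα : 0 ≤ α) (C : ℝ)
    (hbound : ∀ h ∈ Ioo (0 : ℝ) 1, ∀ x, ‖a h x‖ ≤ C * h ^ α) :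
    ∀ ε > 0, ∀ k : ℕ, ∃ Cε : ℝ, ∀ h ∈ Ioo (0 : ℝ) 1, ∀ x,
      ‖iteratedFDeriv ℝ k (a h) x‖ ≤ Cε * h ^ (α * (1 - ε) - δ * k) := by
  intro ε hε k
  set N := max (k + 1) (Nat.ceil ((k : ℝ) / ε)) with hNdef
  have hN1 : 1 ≤ N := le_trans (by omega) (le_max_left _ _)
  have hkN : k ≤ N := le_trans (by omega) (le_max_left (k + 1) _)
  have hNε : (k : ℝ) ≤ (N : ℝ) * ε := by
    have h1 : (k : ℝ) / ε ≤ (Nat.ceil ((k : ℝ) / ε) : ℝ) := Nat.le_ceil _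
    have h2 : ((Nat.ceil ((k : ℝ) / ε) : ℕ) : ℝ) ≤ (N : ℝ) := by
      exact_mod_cast le_max_right (k + 1) _
    have h3 := (div_le_iff₀ hε).1 (h1.trans h2)
    linarith
  obtain ⟨CN, hCN⟩ := hS N
  have hhalf : (1 : ℝ) / 2 ∈ Ioo (0 : ℝ) 1 := by norm_num
  have hC0 : 0 ≤ C := by
    have h1 := hbound _ hhalf 0
    have hp : (0 : ℝ) < ((1 : ℝ) / 2) ^ α := Real.rpow_pos_of_pos (by norm_num) α
    nlinarith [norm_nonneg (a (1 / 2) 0)]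
  have hCN0 : 0 ≤ CN := by
    have h1 := hCN _ hhalf 0
    have hp : (0 : ℝ) < ((1 : ℝ) / 2) ^ (-(δ * N)) := Real.rpow_pos_of_pos (by norm_num) _
    nlinarith [norm_nonneg (iteratedFDeriv ℝ N (a (1 / 2)) 0)]
  set D : ℝ := 9 ^ (N ^ 3) * (C ^ (N - k) * CN ^ k) with hD
  have hD0 : 0 ≤ D := by positivity
  refine ⟨1 + D, ?_⟩
  intro h hh x
  obtain ⟨hh0, hh1⟩ := hh
  set s : ℕ → ℝ := fun j => ⨆ y, ‖iteratedFDeriv ℝ j (a h) y‖ with hsdef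
  have bdd : ∀ j, BddAbove (range fun y => ‖iteratedFDeriv ℝ j (a h) y‖) := by
    intro j
    obtain ⟨Cj, hCj⟩ := hS j
    exact ⟨Cj * h ^ (-(δ * j)), by rintro _ ⟨y, rfl⟩; exact hCj h ⟨hh0, hh1⟩ y⟩
  have hs0 : ∀ j, 0 ≤ s j := fun j => Real.iSup_nonneg fun y => norm_nonneg _
  have hle : ∀ j y, ‖iteratedFDeriv ℝ j (a h) y‖ ≤ s j := fun j y => le_ciSup (bdd j) y
  have hsle : ∀ (j : ℕ) (M : ℝ), (∀ y, ‖iteratedFDeriv ℝ j (a h) y‖ ≤ M) → s j ≤ M :=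
    fun j M hM => ciSup_le hM
  have hrec : ∀ j, j + 2 ≤ N → (s (j + 1)) ^ 2 ≤ 9 * (s j * s (j + 2)) := by
    intro j _
    apply sq_le_of_landau_bound (hs0 _) (hs0 _) (hs0 _)
    intro t ht
    exact hsle _ _ fun y =>
      landau_iterated (a h) (hsmooth h ⟨hh0, hh1⟩) j (hle j) (hle (j + 2)) ht y
  have hinterp := interp_seq N hN1 s hs0 hrec k hkN
  have hs0le : s 0 ≤ C * h ^ α := hsle 0 _ fun y => by
    rw [norm_iteratedFDeriv_zero]; exact hbound h ⟨hh0, hh1⟩ y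
  have hsNle : s N ≤ CN * h ^ (-(δ * N)) := hsle N _ (hCN h ⟨hh0, hh1⟩)
  have hhp : (0 : ℝ) < h := hh0
  have hrp : ∀ (e : ℝ) (m : ℕ), (h ^ e) ^ m = h ^ (e * m) := by
    intro e m
    rw [← Real.rpow_natCast (h ^ e) m, ← Real.rpow_mul hhp.le]
  set e : ℝ := α * (1 - ε) - δ * k with he
  have step1 : (s k) ^ N ≤ D * h ^ (α * ((N - k : ℕ) : ℝ) + -(δ * N) * k) := by
    calc (s k) ^ N ≤ 9 ^ (N ^ 3) * ((s 0) ^ (N - k) * (s N) ^ k) := hinterp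
      _ ≤ 9 ^ (N ^ 3) * ((C * h ^ α) ^ (N - k) * (CN * h ^ (-(δ * N))) ^ k) := by
          apply mul_le_mul_of_nonneg_left _ (by positivity)
          exact mul_le_mul (pow_le_pow_left₀ (hs0 0) hs0le _)
            (pow_le_pow_left₀ (hs0 N) hsNle _) (pow_nonneg (hs0 N) k) (by positivity)
      _ = D * h ^ (α * ((N - k : ℕ) : ℝ) + -(δ * N) * k) := by
          rw [hD, mul_pow, mul_pow, hrp α (N - k), hrp (-(δ * N)) k, Real.rpow_add hhp]
          ring
  have hcast : ((N - k : ℕ) : ℝ) = (N : ℝ) - k := Nat.cast_sub hkN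
  have hexpcomp : e * N ≤ α * ((N - k : ℕ) : ℝ) + -(δ * N) * k := by
    rw [hcast, he]
    nlinarith [mul_le_mul_of_nonneg_left hNε hα]
  have hfinal : (s k) ^ N ≤ ((1 + D) * h ^ e) ^ N := by
    calc (s k) ^ N ≤ D * h ^ (α * ((N - k : ℕ) : ℝ) + -(δ * N) * k) := step1
      _ ≤ (1 + D) ^ N * h ^ (e * N) := by
          apply mul_le_mul
          · exact le_trans (by linarith) (le_self_pow₀ (by linarith) (by omega))
          · exact Real.rpow_le_rpow_of_exponent_ge hhp hh1.le hexpcomp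
          · positivity
          · positivity
      _ = ((1 + D) * h ^ e) ^ N := by rw [mul_pow, hrp e N]
  have hsk : s k ≤ (1 + D) * h ^ e :=
    le_of_pow_le_pow_left₀ (by omega) (by positivity) hfinal
  exact le_trans (hle k x) hsk
end
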